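/- For fixed q ≥ 2, P_{q,n} = q^n − (q−1)^n + O(⌈q/2⌉^n) as n → ∞; more precisely, |P_{q,n} − (q^n − (q−1)^n)| ≤ (q−1)·⌈q/2⌉^n for all n. -/

import Mathlib

/-- `P_{q,n}`: the number of sequences in `{0,…,q-1}^n` with some zero entry,
some nonzero entry, and gcd of entries 1. -/
noncomputable def pearsonCount (q n : ℕ) : ℕ :=
  Set.ncard {x : Fin n → ℕ |
    (∀ i, x i ≤ q - 1) ∧ (∃ i, x i = 0) ∧ (∃ i, 0 < x i) ∧
    Finset.univ.gcd x = 1}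

/-- For fixed `q ≥ 2`, `P_{q,n} = q^n − (q−1)^n + O(⌈q/2⌉^n)` as `n → ∞`;
more precisely `|P_{q,n} − (q^n − (q−1)^n)| ≤ (q−1)·⌈q/2⌉^n` for all `n ≥ 1`.
(Here `⌈q/2⌉ = (q+1)/2` with natural division.) -/
theorem stmt_14 (q : ℕ) (hq : 2 ≤ q) :
    ∀ n : ℕ, 1 ≤ n →
      |(pearsonCount q n : ℤ) - ((q : ℤ) ^ n - ((q : ℤ) - 1) ^ n)|
        ≤ ((q : ℤ) - 1) * (((q + 1) / 2 : ℕ) : ℤ) ^ n := by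
  intro n hn
  classical
  set M : ℕ := (q + 1) / 2 with hMdef
  have hM1 : 1 ≤ M := by omega
  set B : Finset (Fin n → ℕ) := Fintype.piFinset (fun _ => Finset.range q) with hBdef
  have hBmem : ∀ x : Fin n → ℕ, x ∈ B ↔ ∀ i, x i < q := by
    intro x; simp [hBdef]
  set F : Finset (Fin n → ℕ) :=
    B.filter (fun x => (∃ i, x i = 0) ∧ (∃ i, 0 < x i) ∧ Finset.univ.gcd x = 1) with hFdef
  have hset : {x : Fin n → ℕ |
      (∀ i, x i ≤ q - 1) ∧ (∃ i, x i = 0) ∧ (∃ i, 0 < x i) ∧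
      Finset.univ.gcd x = 1} = ↑F := by
    ext x
    simp only [Set.mem_setOf_eq, Finset.mem_coe, hFdef, Finset.mem_filter, hBmem]
    constructor
    · rintro ⟨h1, h2⟩
      exact ⟨fun i => by have := h1 i; omega, h2⟩
    · rintro ⟨h1, h2⟩
      exact ⟨fun i => by have := h1 i; omega, h2⟩
  have hP : pearsonCount q n = F.card := by
    rw [pearsonCount, hset, Set.ncard_coe_finset]
  -- count of B
  have hBcard : B.card = q ^ n := by
    simp [hBdef, Fintype.card_piFinset]
  -- those with some zero entry
  set Z : Finset (Fin n → ℕ) := B.filter (fun x => ∃ i, x i = 0) with hZdef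
  have hZcard : Z.card + (q - 1) ^ n = q ^ n := by
    have hnotZ : B.filter (fun x => ¬ ∃ i, x i = 0)
        = Fintype.piFinset (fun _ : Fin n => Finset.Ioo 0 q) := by
      ext x
      simp only [Finset.mem_filter, hBmem, Fintype.mem_piFinset, Finset.mem_Ioo, not_exists]
      constructor
      · rintro ⟨h1, h2⟩ i
        exact ⟨Nat.pos_of_ne_zero (h2 i), h1 i⟩
      · intro h
        exact ⟨fun i => (h i).2, fun i => Nat.pos_iff_ne_zero.mp (h i).1⟩
    have hnotZcard : (B.filter (fun x => ¬ ∃ i, x i = 0)).card = (q - 1) ^ n := by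
      rw [hnotZ, Fintype.card_piFinset]
      simp
    rw [hZdef, ← hnotZcard, Finset.card_filter_add_card_filter_not, hBcard]
  -- the zero function
  have hz0 : (fun _ : Fin n => 0) ∈ Z := by
    rw [hZdef, Finset.mem_filter, hBmem]
    exact ⟨fun i => by show 0 < q; omega, ⟨⟨0, hn⟩, rfl⟩⟩
  set A : Finset (Fin n → ℕ) := Z.erase (fun _ : Fin n => 0) with hAdef
  have hAcard : A.card + 1 = Z.card := by
    rw [hAdef, Finset.card_erase_add_one hz0]
  have hAmem : ∀ x : Fin n → ℕ, x ∈ A ↔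
      (∀ i, x i < q) ∧ (∃ i, x i = 0) ∧ (∃ i, 0 < x i) := by
    intro x
    rw [hAdef, Finset.mem_erase, hZdef, Finset.mem_filter, hBmem]
    constructor
    · rintro ⟨hne, h1, h2⟩
      refine ⟨h1, h2, ?_⟩
      by_contra h
      push_neg at h
      exact hne (funext fun i => by have := h i; show x i = 0; omega)
    · rintro ⟨h1, h2, i, hi⟩
      refine ⟨?_, h1, h2⟩
      intro heq
      rw [heq] at hi
      exact absurd hi (by simp)
  have hFA : F = A.filter (fun x => Finset.univ.gcd x = 1) := by
    ext x
    rw [hFdef, Finset.mem_filter, Finset.mem_filter, hAmem, hBmem]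
    tauto
  set K : Finset (Fin n → ℕ) := A.filter (fun x => ¬ Finset.univ.gcd x = 1) with hKdef
  have hsplit : F.card + K.card = A.card := by
    rw [hFA, hKdef, Finset.card_filter_add_card_filter_not]
  -- bound on K
  have hcount : ∀ d, 2 ≤ d → ((Finset.range q).filter (fun m => d ∣ m)).card ≤ M := by
    intro d hd
    have : ((Finset.range q).filter (fun m => d ∣ m)).card ≤ (Finset.range M).card := by
      apply Finset.card_le_card_of_injOn (fun m => m / d)
      · intro m hm
        simp only [Finset.mem_coe, Finset.mem_filter, Finset.mem_range] at hm
        rw [Finset.mem_coe, Finset.mem_range]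
        have h1 : m / d ≤ m / 2 := Nat.div_le_div_left hd (by norm_num)
        have h2 : m / 2 ≤ (q - 1) / 2 := Nat.div_le_div_right (by omega)
        show m / d < M
        omega
      · intro a ha b hb hab
        simp only [Finset.coe_filter, Set.mem_setOf_eq] at ha hb
        obtain ⟨a', rfl⟩ := ha.2
        obtain ⟨b', rfl⟩ := hb.2
        simp only [Nat.mul_div_cancel_left _ (by omega : 0 < d)] at hab
        rw [hab]
    simpa using this
  have hKsub : K ⊆ (Finset.Icc 2 (q - 1)).biUnion
      (fun d => Fintype.piFinset (fun _ : Fin n => (Finset.range q).filter (fun m => d ∣ m))) := by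
    intro x hx
    simp only [hKdef, Finset.mem_filter, hAmem] at hx
    obtain ⟨⟨hlt, _, i, hi⟩, hg⟩ := hx
    set d := Finset.univ.gcd x with hd
    have hddvd : ∀ j, d ∣ x j := fun j => Finset.gcd_dvd (Finset.mem_univ j)
    have hd0 : d ≠ 0 := by
      intro h
      have := Finset.gcd_eq_zero_iff.mp h i (Finset.mem_univ i)
      omega
    have hdle : d ≤ q - 1 := by
      have h1 := Nat.le_of_dvd hi (hddvd i)
      have h2 := hlt i
      omega
    refine Finset.mem_biUnion.mpr ⟨d, Finset.mem_Icc.mpr ⟨by omega, hdle⟩, ?_⟩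
    rw [Fintype.mem_piFinset]
    intro j
    exact Finset.mem_filter.mpr ⟨Finset.mem_range.mpr (hlt j), hddvd j⟩
  have hKcard : K.card ≤ (q - 2) * M ^ n := by
    calc K.card ≤ ((Finset.Icc 2 (q - 1)).biUnion
        (fun d => Fintype.piFinset (fun _ : Fin n => (Finset.range q).filter (fun m => d ∣ m)))).card :=
          Finset.card_le_card hKsub
      _ ≤ ∑ d ∈ Finset.Icc 2 (q - 1),
          (Fintype.piFinset (fun _ : Fin n => (Finset.range q).filter (fun m => d ∣ m))).card :=
          Finset.card_biUnion_le
      _ ≤ ∑ d ∈ Finset.Icc 2 (q - 1), M ^ n := by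
          apply Finset.sum_le_sum
          intro d hd
          rw [Finset.mem_Icc] at hd
          rw [Fintype.card_piFinset]
          calc ∏ _i : Fin n, ((Finset.range q).filter (fun m => d ∣ m)).card
              ≤ ∏ _i : Fin n, M := Finset.prod_le_prod (fun _ _ => Nat.zero_le _)
                (fun _ _ => hcount d hd.1)
            _ = M ^ n := by simp
      _ = (q - 2) * M ^ n := by
          rw [Finset.sum_const, Nat.card_Icc]
          simp [Nat.smul_one_eq_cast]
          omega
  -- final arithmetic
  have hKM : K.card + 1 ≤ (q - 1) * M ^ n := by
    have hMn : 1 ≤ M ^ n := Nat.one_le_pow _ _ hM1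
    calc K.card + 1 ≤ (q - 2) * M ^ n + M ^ n := add_le_add hKcard hMn
      _ = (q - 1) * M ^ n := by
          rw [← Nat.succ_mul]
          congr 1
          omega
  rw [hP]
  have hb : ((q : ℤ) - 1) ^ n = (((q - 1 : ℕ) : ℤ)) ^ n := by
    congr 1
    push_cast [Nat.cast_sub (by omega : 1 ≤ q)]
    ring
  have key : (F.card : ℤ) - ((q : ℤ) ^ n - ((q : ℤ) - 1) ^ n) = -((K.card : ℤ) + 1) := by
    rw [hb]
    have e1 : (F.card : ℤ) + K.card = A.card := by exact_mod_cast hsplit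
    have e2 : (A.card : ℤ) + 1 = Z.card := by exact_mod_cast hAcard
    have e3 : (Z.card : ℤ) + ((q - 1 : ℕ) : ℤ) ^ n = (q : ℤ) ^ n := by exact_mod_cast hZcard
    linarith
  rw [key, abs_neg, abs_of_nonneg (by positivity)]
  have : ((q : ℤ) - 1) * ((M : ℕ) : ℤ) ^ n = (((q - 1) * M ^ n : ℕ) : ℤ) := by
    push_cast [Nat.cast_sub (by omega : 1 ≤ q)]
    ring
  rw [hMdef] at *
  calc ((K.card : ℤ) + 1) = (((K.card + 1 : ℕ)) : ℤ) := by push_cast; ring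
    _ ≤ (((q - 1) * ((q + 1) / 2) ^ n : ℕ) : ℤ) := by exact_mod_cast hKM
    _ = ((q : ℤ) - 1) * (((q + 1) / 2 : ℕ) : ℤ) ^ n := by
        push_cast [Nat.cast_sub (by omega : 1 ≤ q)]
        ring
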